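/- Let τ be a basic path of A, or a prefix of a basic path, valid from a configuration whose counter value is v > cT, let ℓ be the length of τ, and let i ∈ {0, 1, …, m}. If ℓ < 𝔰_{i+1}(v) and some counter value along τ is at most T′, then i ≥ 1 and τ contains, as a contiguous infix, β^{b⁴·P} (that is, b⁴·P consecutive repetitions of β) for some cycle β of length at most b whose slope equals 𝑒_j for some index 1 ≤ j ≤ i (in particular the slope of β is negative and at most 𝑒ᵢ). -/

import Mathlib

/-- A transition of a one-counter automaton: source state, guard
(`false` = "=0", `true` = ">0"), counter effect, target state. -/
abbrev OTrans (St : Type) := St × Bool × ℤ × St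

/-- A one-counter automaton over states `St` and atomic propositions `AP`. -/
structure OCA (St AP : Type) where
  delta : Set (OTrans St)
  label : St → AP
  effect_mem : ∀ t ∈ delta, t.2.2.1 = -1 ∨ t.2.2.1 = 0 ∨ t.2.2.1 = 1
  eq0_effect : ∀ t ∈ delta, t.2.1 = false → t.2.2.1 = 0 ∨ t.2.2.1 = 1
  total_eq0 : ∀ s : St, ∃ e s', (s, false, e, s') ∈ delta
  total_gt0 : ∀ s : St, ∃ e s', (s, true, e, s') ∈ delta

namespace OCA

variable {St AP : Type}

/-- One step of the OCA via a given transition. -/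
def StepVia (A : OCA St AP) (t : OTrans St) (c c' : St × ℕ) : Prop :=
  t ∈ A.delta ∧ t.1 = c.1 ∧ t.2.2.2 = c'.1 ∧
    (if t.2.1 then 0 < c.2 else c.2 = 0) ∧ (c'.2 : ℤ) = (c.2 : ℤ) + t.2.2.1

/-- One step of the OCA. -/
def Step (A : OCA St AP) (c c' : St × ℕ) : Prop := ∃ t, A.StepVia t c c'

/-- Reachability in exactly `n` steps: `(s,v) ⇝^n (s',v')`. -/
def ReachN (A : OCA St AP) : ℕ → St × ℕ → St × ℕ → Prop
  | 0, c, c' => c = c'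
  | n + 1, c, c' => ∃ c'', A.Step c c'' ∧ A.ReachN n c'' c'

end OCA

/-- CTL+Sync formulas. -/
inductive CTLSync (AP : Type) : Type where
  | tt : CTLSync AP
  | atom : AP → CTLSync AP
  | and : CTLSync AP → CTLSync AP → CTLSync AP
  | not : CTLSync AP → CTLSync AP
  | EX : CTLSync AP → CTLSync AP
  | EU : CTLSync AP → CTLSync AP → CTLSync AP
  | AU : CTLSync AP → CTLSync AP → CTLSync AP
  | UA : CTLSync AP → CTLSync AP → CTLSync AP
  | UE : CTLSync AP → CTLSync AP → CTLSync AP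

/-- Satisfaction of CTL+Sync formulas over an arbitrary transition system
given by a step relation and a state labelling. -/
def SatTS {C AP : Type} (step : C → C → Prop) (label : C → AP) :
    CTLSync AP → C → Prop
  | .tt, _ => True
  | .atom q, c => label c = q
  | .and φ ψ, c => SatTS step label φ c ∧ SatTS step label ψ c
  | .not φ, c => ¬ SatTS step label φ c
  | .EX φ, c => ∃ c', step c c' ∧ SatTS step label φ c'
  | .EU φ ψ, c => ∃ τ : ℕ → C, τ 0 = c ∧ (∀ i, step (τ i) (τ (i + 1))) ∧
      ∃ k, SatTS step label ψ (τ k) ∧ ∀ j < k, SatTS step label φ (τ j)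
  | .AU φ ψ, c => ∀ τ : ℕ → C, τ 0 = c → (∀ i, step (τ i) (τ (i + 1))) →
      ∃ k, SatTS step label ψ (τ k) ∧ ∀ j < k, SatTS step label φ (τ j)
  | .UA φ ψ, c => ∃ k, ∀ τ : ℕ → C, τ 0 = c → (∀ i < k, step (τ i) (τ (i + 1))) →
      SatTS step label ψ (τ k) ∧ ∀ j < k, SatTS step label φ (τ j)
  | .UE φ ψ, c => ∃ k, ∀ j < k, ∃ τ : ℕ → C, τ 0 = c ∧
      (∀ i < k, step (τ i) (τ (i + 1))) ∧
      SatTS step label φ (τ j) ∧ SatTS step label ψ (τ k)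

/-- Satisfaction of a CTL+Sync formula at a configuration of an OCA. -/
def OCA.Sat {St AP : Type} (A : OCA St AP) (φ : CTLSync AP) (c : St × ℕ) : Prop :=
  SatTS A.Step (fun c => A.label c.1) φ c

/-- `φ` is `(t, p)`-periodic with respect to `A`. -/
def Periodic {St AP : Type} (A : OCA St AP) (φ : CTLSync AP) (t p : ℕ) : Prop :=
  ∀ (s : St) (v v' : ℕ), t < v → t < v' → v % p = v' % p →
    (A.Sat φ (s, v) ↔ A.Sat φ (s, v'))

/-- Consecutiveness of transitions: the target of one is the source of the next. -/
def ChainRel {St : Type} (t t' : OTrans St) : Prop := t.2.2.2 = t'.1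

namespace OCA

variable {St AP : Type}

/-- Executing a list of transitions from a configuration (all guards satisfied). -/
def RunsTo (A : OCA St AP) : List (OTrans St) → St × ℕ → St × ℕ → Prop
  | [], c, c' => c = c'
  | t :: ts, c, c' => ∃ c'', A.StepVia t c c'' ∧ A.RunsTo ts c'' c'

end OCA

/-- A nonempty chained list of transitions whose first source equals its last target. -/
def IsCycle {St : Type} (β : List (OTrans St)) : Prop :=
  β ≠ [] ∧ List.Chain' ChainRel β ∧
    β.head?.map (fun t => t.1) = β.getLast?.map (fun t => t.2.2.2)

/-- A linear path scheme `α₀ β₁* α₁ ⋯ β_k* α_k`: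
`head` is `α₀` and `segs` is the list of pairs `(βᵢ, αᵢ)`. -/
structure LPS (St : Type) where
  head : List (OTrans St)
  segs : List (List (OTrans St) × List (OTrans St))

/-- The flattening `α₀ β₁ α₁ ⋯ β_k α_k` of an LPS. -/
def LPS.flat {St : Type} (π : LPS St) : List (OTrans St) :=
  π.head ++ (π.segs.map (fun p => p.1 ++ p.2)).flatten

/-- The size of an LPS is the number of cycles `k`. -/
def LPS.size {St : Type} (π : LPS St) : ℕ := π.segs.length

/-- `π` is an LPS of the OCA `A`: its flattening is a transition path of `A`
and every `βᵢ` is a cycle. -/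
def OCA.IsLPS {St AP : Type} (A : OCA St AP) (π : LPS St) : Prop :=
  (∀ t ∈ π.flat, t ∈ A.delta) ∧ List.Chain' ChainRel π.flat ∧
    ∀ p ∈ π.segs, IsCycle p.1

/-- `c`-fold concatenation of a list with itself. -/
def listPow {α : Type} (β : List α) (c : ℕ) : List α := (List.replicate c β).flatten

/-- `τ` is `π`-shaped: `τ = α₀ β₁^{c₁} α₁ ⋯ β_k^{c_k} α_k` for some counts `cᵢ`. -/
def LPS.Shaped {St : Type} (π : LPS St) (τ : List (OTrans St)) : Prop :=
  ∃ cs : List ℕ, cs.length = π.segs.length ∧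
    τ = π.head ++ ((π.segs.zip cs).map (fun p => listPow p.1.1 p.2 ++ p.1.2)).flatten

/-- The effect of a list of transitions: the sum of the counter effects. -/
def effectOf {St : Type} (τ : List (OTrans St)) : ℤ := (τ.map (fun t => t.2.2.1)).sum

/-- The slope of a list of transitions: its effect divided by its length. -/
def slopeOf {St : Type} (τ : List (OTrans St)) : ℚ :=
  (effectOf τ : ℚ) / (τ.length : ℚ)

/-- The finite set of basic slopes with bound `b`: rationals `x / y` with
`x ∈ ℤ`, `1 ≤ y ≤ b` and `|x| ≤ y`. -/
noncomputable def basicSlopes (b : ℕ) : Finset ℚ :=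
  (((Finset.Icc (-(b : ℤ)) (b : ℤ)) ×ˢ (Finset.Icc 1 b)).image
    (fun p => (p.1 : ℚ) / (p.2 : ℚ))).filter (fun q => |q| ≤ 1)

/-- The increasing enumeration `𝑒₁ < 𝑒₂ < ⋯` of all basic slopes (1-indexed;
out-of-range indices yield the junk value `0`). -/
noncomputable def slopeE (b : ℕ) (i : ℕ) : ℚ := ((basicSlopes b).sort (· ≤ ·)).getD (i - 1) 0

/-- The number `m` of negative basic slopes. -/
noncomputable def numNegSlopes (b : ℕ) : ℕ := ((basicSlopes b).filter (fun q => q < 0)).card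

/-- `B = lcm {1, …, 2b³}`. -/
def lcmB (b : ℕ) : ℕ := (Finset.Icc 1 (2 * b ^ 3)).lcm id

/-- The period `P = B · P′`. -/
def bigP (b P' : ℕ) : ℕ := lcmB b * P'

/-- The segment threshold `sT = b⁹ · P`. -/
def sThresh (b P' : ℕ) : ℕ := b ^ 9 * bigP b P'

/-- The counter threshold `cT = b¹¹ · P`. -/
def cThresh (b P' : ℕ) : ℕ := b ^ 11 * bigP b P'

/-- The start `𝔰ᵢ(v)` of Segment `i`: `𝔰₀(v) = 0` and, for `i ≥ 1`, writing
`−𝑒ᵢ = xᵢ/yᵢ` in lowest terms, `𝔰ᵢ(v) = ⌊yᵢ (v − T′) / xᵢ⌋ − b⁸·P`. -/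
noncomputable def segStart (b T' P' v i : ℕ) : ℤ :=
  if i = 0 then 0
  else ⌊(((-(slopeE b i)).den : ℚ) * ((v : ℚ) - (T' : ℚ)) / ((-(slopeE b i)).num : ℚ))⌋
        - (b : ℤ) ^ 8 * (bigP b P' : ℤ)

/-- The core of a computation tree starting at counter value `v`:
`⋃_{i=0}^{m} [𝔰ᵢ(v), 𝔰ᵢ(v) + sT)`. -/
def inCore (b T' P' v ℓ : ℕ) : Prop :=
  ∃ i ≤ numNegSlopes b,
    segStart b T' P' v i ≤ (ℓ : ℤ) ∧ (ℓ : ℤ) < segStart b T' P' v i + (sThresh b P' : ℤ)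

/-- The largest index `i ∈ {0, …, m}` with `ℓ ∈ [𝔰ᵢ(v), 𝔰ᵢ(v) + sT)`. -/
noncomputable def shiftIdx (b T' P' v ℓ : ℕ) : ℕ :=
  Nat.findGreatest
    (fun i => segStart b T' P' v i ≤ (ℓ : ℤ) ∧
      (ℓ : ℤ) < segStart b T' P' v i + (sThresh b P' : ℤ))
    (numNegSlopes b)

/-- The shift map between the cores of the trees from `v` and from `v + P`:
`shift(ℓ) = ℓ` on Segment `0` and `shift(ℓ) = ℓ + P·yᵢ/xᵢ` on Segment `i ≥ 1`. -/
noncomputable def shiftFn (b T' P' v ℓ : ℕ) : ℕ :=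
  let i := shiftIdx b T' P' v ℓ
  if i = 0 then ℓ
  else ℓ + bigP b P' / (-(slopeE b i)).num.toNat * (-(slopeE b i)).den

/-- `u ≡ u′` w.r.t. threshold `T′` and period `P′`: either both are `≥ T′`
and `P′` divides their difference, or both are `< T′` and they are equal. -/
def EquivTP (T' P' u u' : ℕ) : Prop :=
  (T' ≤ u ∧ T' ≤ u' ∧ (P' : ℤ) ∣ ((u : ℤ) - (u' : ℤ))) ∨ (u < T' ∧ u' < T' ∧ u = u')

/-- Every counter value along `τ`, executed from `c`, is strictly above `T`. -/
def OCA.CountersAbove {St AP : Type} (A : OCA St AP) (τ : List (OTrans St))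
    (c : St × ℕ) (T : ℕ) : Prop :=
  ∀ σ c', σ <+: τ → A.RunsTo σ c c' → T < c'.2

/-- `τ` is a basic path of `A` (w.r.t. the LPS bound `b`) from configuration `c`:
it is valid from `c` and `π`-shaped for some LPS of flat length at most `b`. -/
def OCA.IsBasic {St AP : Type} (A : OCA St AP) (b : ℕ) (τ : List (OTrans St))
    (c : St × ℕ) : Prop :=
  ∃ (π : LPS St) (c' : St × ℕ),
    A.IsLPS π ∧ π.flat.length ≤ b ∧ π.Shaped τ ∧ A.RunsTo τ c c'

/-!
Suppose no such cycle occurs in `τ`, and let `σ` be a prefix of `τ` ending at a counter value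
`≤ T′`, so that the effect of `σ` is at most `T′ − v`. Up to permutation, `σ` consists of one
power `βᵏ` of each cycle of the LPS it reaches and at most `b` further transitions. A power with
`k < b⁴·P` has effect at least `−b⁵·P`; a longer descending one has a negative basic slope other
than `𝑒₁, …, 𝑒ᵢ`, so `i < m` and its slope is at least `𝑒ᵢ₊₁`. If `i ≥ m` there are thus no
long descending powers, the effect of `σ` is at least `−b⁶·P − b`, and this contradicts
`v − T′ > cT − P`. If `i < m`, the effect of `σ` is at least `𝑒ᵢ₊₁·|σ| − b⁶·P − b`, while
`|σ| ≤ |τ| < 𝔰ᵢ₊₁(v)` and `b·𝑒ᵢ₊₁ ≤ −1` give `𝑒ᵢ₊₁·|σ| > T′ − v + b⁷·P > T′ − v + b⁶·P + b`.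
-/

open scoped List

lemma List.SortedLT.getElem_lt_iff_lt_countP {α : Type} [LinearOrder α] {l : List α}
    (hl : l.SortedLT) (a : α) {j : ℕ} (hj : j < l.length) :
    l[j] < a ↔ j < l.countP (· < a) := by
  have hsplit := List.countP_append (l₁ := l.take j) (l₂ := l.drop j) (p := (· < a))
  rw [List.take_append_drop] at hsplit
  constructor
  · intro hja
    have htake : (l.take (j + 1)).countP (· < a) = j + 1 := by
      rw [List.countP_eq_length.mpr, List.length_take]
      · omega
      intro x hx
      obtain ⟨k, hk, rfl⟩ := List.getElem_of_mem hx
      simp only [List.getElem_take, decide_eq_true_eq, List.length_take] at hk ⊢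
      exact lt_of_le_of_lt ((hl.getElem_le_getElem_iff).mpr (by omega)) hja
    have := ((List.take_sublist (j + 1) l).countP_le (p := (· < a)))
    omega
  · intro hjc
    by_contra! haj
    have hdrop : (l.drop j).countP (· < a) = 0 := by
      rw [List.countP_eq_zero]
      intro x hx
      obtain ⟨k, hk, rfl⟩ := List.getElem_of_mem hx
      simp only [List.getElem_drop, decide_eq_true_eq, not_lt, List.length_drop] at hk ⊢
      exact haj.trans ((hl.getElem_le_getElem_iff).mpr (by omega))
    have := (l.take j).countP_le_length (p := (· < a))
    simp only [List.length_take] at this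
    omega

section ListPow

variable {α : Type}

lemma listPow_zero (β : List α) : listPow β 0 = [] := rfl

lemma listPow_succ (β : List α) (n : ℕ) : listPow β (n + 1) = β ++ listPow β n := by
  simp [listPow, List.replicate_succ]

lemma listPow_prefix_listPow (β : List α) {m n : ℕ} (h : m ≤ n) :
    listPow β m <+: listPow β n := by
  obtain ⟨k, rfl⟩ := Nat.exists_eq_add_of_le h
  simp only [listPow, List.replicate_add, List.flatten_append]
  exact List.prefix_append _ _

lemma prefix_or_eq_append_of_prefix_append {x y q : List α} (h : q <+: x ++ y) :
    q <+: x ∨ ∃ q', q = x ++ q' ∧ q' <+: y := by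
  rcases List.prefix_or_prefix_of_prefix h (x.prefix_append y) with h' | ⟨q', rfl⟩
  · exact Or.inl h'
  · exact Or.inr ⟨q', rfl, (List.prefix_append_right_inj x).mp h⟩

lemma exists_eq_listPow_append_of_prefix_listPow {β q : List α} {c : ℕ}
    (h : q <+: listPow β c) : ∃ n r, r <+: β ∧ q = listPow β n ++ r := by
  induction c generalizing q with
  | zero => exact ⟨0, q, by simp_all [listPow], by simp [listPow_zero]⟩
  | succ c ih =>
    rw [listPow_succ] at h
    rcases prefix_or_eq_append_of_prefix_append h with h | ⟨q', rfl, h'⟩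
    · exact ⟨0, q, h, by simp [listPow_zero]⟩
    · obtain ⟨n, r, hr, rfl⟩ := ih h'
      exact ⟨n + 1, r, hr, by simp [listPow_succ]⟩

lemma exists_perm_of_prefix_append_listPow {h β q : List α} {c : ℕ}
    (hq : q <+: h ++ listPow β c) :
    ∃ n r, listPow β n <:+: q ∧ r.length ≤ h.length + β.length ∧ q ~ listPow β n ++ r := by
  rcases prefix_or_eq_append_of_prefix_append hq with hq | ⟨q', rfl, hq'⟩
  · exact ⟨0, q, by simp [listPow_zero], by have := hq.length_le; omega, by simp [listPow_zero]⟩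
  · obtain ⟨n, r, hr, rfl⟩ := exists_eq_listPow_append_of_prefix_listPow hq'
    refine ⟨n, h ++ r, ?_, by simp [hr.length_le], ?_⟩
    · exact (List.infix_append h _ r).trans (by simp)
    · exact List.perm_append_comm_assoc h _ r

/-- `α₀ β₁^{c₁} α₁ ⋯ β_k^{c_k} α_k`, for `h = α₀` and `zs = [((β₁, α₁), c₁), …]`. -/
def unrollBlocks (h : List α) (zs : List ((List α × List α) × ℕ)) : List α :=
  h ++ (zs.map fun z => listPow z.1.1 z.2 ++ z.1.2).flatten

lemma exists_perm_of_prefix_unrollBlocks (zs : List ((List α × List α) × ℕ)) {h q : List α}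
    (hq : q <+: unrollBlocks h zs) :
    ∃ (bl : List (List α × ℕ)) (r : List α), bl.length ≤ zs.length ∧
      (∀ p ∈ bl, p.1 ∈ zs.map (·.1.1) ∧ listPow p.1 p.2 <:+: q) ∧
      r.length ≤ h.length + (zs.map fun z => z.1.1.length + z.1.2.length).sum ∧
      q ~ (bl.map fun p => listPow p.1 p.2).flatten ++ r := by
  induction zs generalizing h q with
  | nil =>
    refine ⟨[], q, by simp, by simp, ?_, by simp⟩
    simpa using (by simpa [unrollBlocks] using hq : q <+: h).length_le
  | cons z zs ih =>
    obtain ⟨⟨β, γ⟩, c⟩ := z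
    have hsplit : unrollBlocks h (((β, γ), c) :: zs) = (h ++ listPow β c) ++ unrollBlocks γ zs := by
      simp [unrollBlocks]
    rw [hsplit] at hq
    rcases prefix_or_eq_append_of_prefix_append hq with hq | ⟨q', rfl, hq'⟩
    · obtain ⟨n, r, hpow, hr, hperm⟩ := exists_perm_of_prefix_append_listPow hq
      refine ⟨[(β, n)], r, by simp, by simpa using hpow, ?_, by simpa using hperm⟩
      simp only [List.map_cons, List.sum_cons]
      omega
    · obtain ⟨bl, r, hbl, hblocks, hr, hperm⟩ := ih hq'
      refine ⟨(β, c) :: bl, h ++ r, by simpa using hbl, ?_, ?_, ?_⟩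
      · rintro p (_ | ⟨_, hp⟩)
        · exact ⟨by simp, (List.infix_append h _ q').trans (by simp)⟩
        · exact ⟨List.mem_cons_of_mem _ (hblocks p hp).1,
            (hblocks p hp).2.trans (List.suffix_append _ q').isInfix⟩
      · simp only [List.length_append, List.map_cons, List.sum_cons]
        omega
      · classical
        rw [List.perm_iff_count] at hperm ⊢
        intro t
        simp only [List.map_cons, List.flatten_cons, List.count_append, hperm t]
        omega

end ListPow

namespace LPS

variable {St : Type} (π : LPS St)

lemma length_flat :
    π.flat.length = π.head.length + (π.segs.map fun z => z.1.length + z.2.length).sum := by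
  simp [LPS.flat, List.length_flatten, Function.comp_def]

lemma sublist_flat_of_mem_segs {β : List (OTrans St)} (hβ : β ∈ π.segs.map Prod.fst) :
    β <+ π.flat := by
  obtain ⟨z, hz, rfl⟩ := List.mem_map.mp hβ
  exact ((List.sublist_append_left z.1 z.2).trans (List.sublist_flatten_of_mem
    (List.mem_map_of_mem (f := fun z => z.1 ++ z.2) hz))).trans (List.sublist_append_right _ _)

lemma length_segs_le_length_flat (hne : ∀ z ∈ π.segs, z.1 ≠ []) :
    π.segs.length ≤ π.flat.length := by
  rw [length_flat, ← List.length_map (f := fun z => z.1.length + z.2.length)]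
  refine le_add_left (List.length_le_sum_of_one_le _ ?_)
  simp only [List.mem_map]
  rintro _ ⟨z, hz, rfl⟩
  have := List.length_pos_iff.mpr (hne z hz)
  omega

variable {π}

lemma exists_perm_of_prefix {τ σ : List (OTrans St)} (hτ : π.Shaped τ) (hσ : σ <+: τ) :
    ∃ (bl : List (List (OTrans St) × ℕ)) (r : List (OTrans St)), bl.length ≤ π.segs.length ∧
      (∀ p ∈ bl, p.1 ∈ π.segs.map Prod.fst ∧ listPow p.1 p.2 <:+: σ) ∧
      r.length ≤ π.flat.length ∧
      σ ~ (bl.map fun p => listPow p.1 p.2).flatten ++ r := by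
  obtain ⟨cs, hcs, rfl⟩ := hτ
  have hfst : (π.segs.zip cs).map Prod.fst = π.segs := List.map_fst_zip hcs.ge
  obtain ⟨bl, r, hbl, hblocks, hr, hperm⟩ :=
    exists_perm_of_prefix_unrollBlocks (π.segs.zip cs) (h := π.head) hσ
  refine ⟨bl, r, hbl.trans (by simp), fun p hp => ?_, ?_, hperm⟩
  · rw [← hfst, List.map_map]; exact hblocks p hp
  · rw [length_flat, ← hfst, List.map_map]; exact hr

end LPS

section Effect

variable {St AP : Type}

@[simp]
lemma effectOf_append (x y : List (OTrans St)) : effectOf (x ++ y) = effectOf x + effectOf y := by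
  simp [effectOf]

lemma effectOf_listPow (β : List (OTrans St)) (n : ℕ) :
    effectOf (listPow β n) = n * effectOf β := by
  induction n with
  | zero => simp [listPow_zero, effectOf]
  | succ n ih => rw [listPow_succ, effectOf_append, ih]; push_cast; ring

lemma effectOf_flatten_listPow (bl : List (List (OTrans St) × ℕ)) :
    effectOf (bl.map fun p => listPow p.1 p.2).flatten =
      (bl.map fun p => p.2 * effectOf p.1).sum := by
  induction bl with
  | nil => simp [effectOf]
  | cons p bl ih => simp [ih, effectOf_listPow]

lemma effectOf_eq_of_perm {σ σ' : List (OTrans St)} (h : σ ~ σ') : effectOf σ = effectOf σ' :=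
  (h.map _).sum_eq

lemma length_flatten_listPow {α : Type} (bl : List (List α × ℕ)) :
    (bl.map fun p => listPow p.1 p.2).flatten.length = (bl.map fun p => p.2 * p.1.length).sum := by
  simp [listPow, List.length_flatten, Function.comp_def]

namespace OCA

variable (A : OCA St AP)

lemma abs_effectOf_le {σ : List (OTrans St)} (hσ : ∀ t ∈ σ, t ∈ A.delta) :
    |effectOf σ| ≤ σ.length := by
  induction σ with
  | nil => simp [effectOf]
  | cons t σ ih =>
    have ht : |t.2.2.1| ≤ 1 := by
      rcases A.effect_mem t (hσ t (by simp)) with h | h | h <;> simp [h]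
    have := ih fun t' ht' => hσ t' (by simp [ht'])
    simp only [effectOf, List.map_cons, List.sum_cons, List.length_cons] at this ⊢
    push_cast
    exact (abs_add_le _ _).trans (by linarith)

variable {A}

lemma RunsTo.mem_delta {σ : List (OTrans St)} {c c' : St × ℕ} (h : A.RunsTo σ c c') :
    ∀ t ∈ σ, t ∈ A.delta := by
  induction σ generalizing c with
  | nil => simp
  | cons t σ ih =>
    obtain ⟨c'', hstep, hrest⟩ := h
    simpa [hstep.1] using ih hrest

lemma RunsTo.counter_eq {σ : List (OTrans St)} {c c' : St × ℕ} (h : A.RunsTo σ c c') :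
    (c'.2 : ℤ) = c.2 + effectOf σ := by
  induction σ generalizing c with
  | nil => cases h; simp [effectOf]
  | cons t σ ih =>
    obtain ⟨c'', ⟨-, -, -, -, hc''⟩, hrest⟩ := h
    simp only [effectOf, List.map_cons, List.sum_cons] at ih ⊢
    rw [ih hrest, hc'']
    ring

lemma slopeOf_mem_basicSlopes {β : List (OTrans St)} {b : ℕ} (hβA : ∀ t ∈ β, t ∈ A.delta)
    (hne : β ≠ []) (hβb : β.length ≤ b) : slopeOf β ∈ basicSlopes b := by
  have habs := A.abs_effectOf_le hβA
  have hlen : 0 < β.length := List.length_pos_iff.mpr hne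
  simp only [basicSlopes, Finset.mem_filter, Finset.mem_image, Finset.mem_product,
    Finset.mem_Icc]
  refine ⟨⟨(effectOf β, β.length), ⟨?_, ?_⟩, rfl⟩, ?_⟩
  · rw [abs_le] at habs; omega
  · omega
  · rw [slopeOf, abs_div, Nat.abs_cast, div_le_one (by exact_mod_cast hlen)]
    exact_mod_cast habs

end OCA

end Effect

section Slopes

variable {b : ℕ}

lemma slopeE_succ (b j : ℕ) : slopeE b (j + 1) = ((basicSlopes b).sort (· ≤ ·)).getD j 0 := by
  simp [slopeE]

lemma numNegSlopes_eq_countP (b : ℕ) :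
    numNegSlopes b = ((basicSlopes b).sort (· ≤ ·)).countP (· < 0) := by
  rw [numNegSlopes, Finset.card_def, Finset.filter_val, ← Multiset.countP_eq_card_filter,
    ← Multiset.coe_countP, Finset.sort_eq]

lemma numNegSlopes_le_card (b : ℕ) : numNegSlopes b ≤ ((basicSlopes b).sort (· ≤ ·)).length := by
  rw [numNegSlopes_eq_countP]; exact List.countP_le_length

lemma slopeE_succ_mem_and_neg {j : ℕ} (hj : j < numNegSlopes b) :
    slopeE b (j + 1) ∈ basicSlopes b ∧ slopeE b (j + 1) < 0 := by
  have hjl := hj.trans_le (numNegSlopes_le_card b)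
  rw [slopeE_succ, List.getD_eq_getElem _ _ hjl]
  refine ⟨(Finset.mem_sort _).mp (List.getElem_mem _), ?_⟩
  rw [(Finset.sortedLT_sort _).getElem_lt_iff_lt_countP, ← numNegSlopes_eq_countP]
  exact hj

lemma mul_le_neg_one_of_mem_basicSlopes {q : ℚ} (hq : q ∈ basicSlopes b) (hneg : q < 0) :
    b * q ≤ -1 := by
  simp only [basicSlopes, Finset.mem_filter, Finset.mem_image, Finset.mem_product,
    Finset.mem_Icc] at hq
  obtain ⟨⟨⟨x, y⟩, ⟨-, hy1, hyb⟩, rfl⟩, -⟩ := hq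
  have hy : (0 : ℚ) < y := by exact_mod_cast hy1
  have hx : x ≤ -1 := by
    have : (x : ℚ) < 0 := by simpa [div_neg_iff, hy, hy.not_gt] using hneg
    have : x < 0 := by exact_mod_cast this
    omega
  have hyb' : (y : ℚ) ≤ b := by exact_mod_cast hyb
  have hx' : (x : ℚ) ≤ -1 := by exact_mod_cast hx
  rw [← mul_div_assoc, div_le_iff₀ hy]
  nlinarith

lemma slopeE_succ_le_of_neg {q : ℚ} {i : ℕ} (hq : q ∈ basicSlopes b) (hneg : q < 0)
    (hne : ∀ j, 1 ≤ j → j ≤ i → q ≠ slopeE b j) :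
    i < numNegSlopes b ∧ slopeE b (i + 1) ≤ q := by
  have hsorted := Finset.sortedLT_sort (basicSlopes b)
  obtain ⟨k, hk, rfl⟩ := List.getElem_of_mem ((Finset.mem_sort (· ≤ ·)).mpr hq)
  have hkm : k < numNegSlopes b := by
    rwa [numNegSlopes_eq_countP, ← hsorted.getElem_lt_iff_lt_countP]
  have hik : i ≤ k := by
    by_contra! hki
    exact hne (k + 1) (by omega) hki (by rw [slopeE_succ, List.getD_eq_getElem])
  refine ⟨hik.trans_lt hkm, ?_⟩
  rw [slopeE_succ, List.getD_eq_getElem _ _ (by omega)]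
  exact hsorted.getElem_le_getElem_iff.mpr hik

end Slopes

section EffectBound

variable {St AP : Type}

lemma OCA.slopeE_succ_le_slopeOf {A : OCA St AP} {β : List (OTrans St)} {b i : ℕ}
    (hβA : ∀ t ∈ β, t ∈ A.delta) (hβb : β.length ≤ b) (hneg : effectOf β < 0)
    (hne : ∀ j, 1 ≤ j → j ≤ i → slopeOf β ≠ slopeE b j) :
    i < numNegSlopes b ∧ slopeE b (i + 1) ≤ slopeOf β := by
  have hβ : β ≠ [] := by rintro rfl; simp [effectOf] at hneg
  refine slopeE_succ_le_of_neg (A.slopeOf_mem_basicSlopes hβA hβ hβb) ?_ hne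
  exact div_neg_of_neg_of_pos (by exact_mod_cast hneg)
    (by exact_mod_cast List.length_pos_iff.mpr hβ)

lemma mul_length_le_mul_effectOf_add {β : List (OTrans St)} {b n N : ℕ} {e : ℚ}
    (habs : |effectOf β| ≤ β.length) (hβb : β.length ≤ b) (he : e ≤ 0)
    (hsteep : N ≤ n → effectOf β < 0 → e ≤ slopeOf β) :
    e * (n * β.length) ≤ n * effectOf β + N * b := by
  have hw : -(β.length : ℚ) ≤ effectOf β := by exact_mod_cast neg_le_of_abs_le habs
  have hL : (β.length : ℚ) ≤ b := by exact_mod_cast hβb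
  have heL : e * (n * β.length) ≤ 0 := mul_nonpos_of_nonpos_of_nonneg he (by positivity)
  rcases le_or_gt 0 (effectOf β) with hpos | hneg
  · have : (0 : ℚ) ≤ n * effectOf β := by positivity
    nlinarith
  rcases lt_or_ge n N with hn | hn
  · have hn' : (n : ℚ) ≤ N := by exact_mod_cast hn.le
    have hneg' : (effectOf β : ℚ) < 0 := by exact_mod_cast hneg
    nlinarith
  · have hlen : (0 : ℚ) < β.length := by exact_mod_cast (abs_pos.mpr hneg.ne).trans_le habs
    have hslope := hsteep hn hneg
    rw [slopeOf, le_div_iff₀ hlen] at hslope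
    nlinarith

lemma effectOf_ge_of_perm {σ r : List (OTrans St)} {bl : List (List (OTrans St) × ℕ)}
    (hperm : σ ~ (bl.map fun p => listPow p.1 p.2).flatten ++ r) {e K : ℚ} (he : e ≤ 0)
    (hblock : ∀ p ∈ bl, e * (p.2 * p.1.length) ≤ (p.2 * effectOf p.1 : ℚ) + K)
    (hr : |effectOf r| ≤ r.length) :
    e * σ.length - (bl.length * K + r.length) ≤ effectOf σ := by
  have hsum := List.sum_le_sum hblock
  simp only [List.sum_map_add, List.sum_map_mul_left, List.map_const', List.sum_replicate,
    nsmul_eq_mul] at hsum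
  have heff : (effectOf σ : ℚ) = (bl.map fun p => (p.2 * effectOf p.1 : ℚ)).sum + effectOf r := by
    rw [effectOf_eq_of_perm hperm, effectOf_append, effectOf_flatten_listPow]
    push_cast; simp [Function.comp_def]
  have hlen : (σ.length : ℚ) = (bl.map fun p => (p.2 * p.1.length : ℚ)).sum + r.length := by
    rw [hperm.length_eq, List.length_append, length_flatten_listPow]
    push_cast; simp [Function.comp_def]
  have hr' : -(r.length : ℚ) ≤ effectOf r := by exact_mod_cast neg_le_of_abs_le hr
  have hSL : e * σ.length ≤ e * (bl.map fun p => (p.2 * p.1.length : ℚ)).sum := by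
    refine mul_le_mul_of_nonpos_left ?_ he
    have : (0 : ℚ) ≤ r.length := by positivity
    linarith
  linarith

lemma OCA.effectOf_ge_of_prefix_shaped (A : OCA St AP) {π : LPS St} {b : ℕ} (hπ : A.IsLPS π)
    (hπb : π.flat.length ≤ b) {τ σ : List (OTrans St)} (hτ : π.Shaped τ) (hσ : σ <+: τ)
    (hσA : ∀ t ∈ σ, t ∈ A.delta) (N : ℕ) (e : ℚ) (he : e ≤ 0)
    (hsteep : ∀ β, IsCycle β → β.length ≤ b → (∀ t ∈ β, t ∈ A.delta) →
      listPow β N <:+: σ → effectOf β < 0 → e ≤ slopeOf β) :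
    e * σ.length - (b * N * b + b) ≤ effectOf σ := by
  obtain ⟨bl, r, hbl, hblocks, hr, hperm⟩ := LPS.exists_perm_of_prefix hτ hσ
  have hblock : ∀ p ∈ bl, e * (p.2 * p.1.length) ≤ (p.2 * effectOf p.1 : ℚ) + N * b := by
    intro p hp
    obtain ⟨hseg, hpow⟩ := hblocks p hp
    have hsub := π.sublist_flat_of_mem_segs hseg
    have hpA : ∀ t ∈ p.1, t ∈ A.delta := fun t ht => hπ.1 t (hsub.subset ht)
    have hcyc : IsCycle p.1 := by
      obtain ⟨z, hz, hzp⟩ := List.mem_map.mp hseg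
      exact hzp ▸ hπ.2.2 z hz
    exact mul_length_le_mul_effectOf_add (A.abs_effectOf_le hpA) (hsub.length_le.trans hπb) he
      fun hn => hsteep p.1 hcyc (hsub.length_le.trans hπb) hpA
        (((listPow_prefix_listPow p.1 hn).isInfix).trans hpow)
  have hσ_eff := effectOf_ge_of_perm hperm he hblock
    (A.abs_effectOf_le fun t ht => hσA t (hperm.symm.subset (List.mem_append_right _ ht)))
  have hbl_b : (bl.length : ℚ) ≤ b := by
    have := π.length_segs_le_length_flat fun z hz => (hπ.2.2 z hz).1
    exact_mod_cast (by omega : bl.length ≤ b)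
  have hr_b : (r.length : ℚ) ≤ b := by exact_mod_cast hr.trans hπb
  have hNb : (bl.length : ℚ) * (N * b) ≤ b * N * b := by
    calc (bl.length : ℚ) * (N * b) ≤ b * (N * b) := by gcongr
      _ = b * N * b := by ring
  linarith

end EffectBound

lemma bigP_pos (b : ℕ) {P' : ℕ} (hP' : 1 ≤ P') : 1 ≤ bigP b P' := by
  have hB : lcmB b ≠ 0 := by simp [lcmB, Finset.lcm_eq_zero_iff]
  exact Nat.one_le_iff_ne_zero.mpr (Nat.mul_ne_zero hB (by omega))

lemma add_le_pow_seven_mul_bigP {b P' : ℕ} (hb : 2 ≤ b) (hP' : 1 ≤ P') :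
    (b * (b ^ 4 * bigP b P') * b + b + bigP b P' : ℚ) ≤ b ^ 7 * bigP b P' := by
  have hP := bigP_pos b hP'
  set P := bigP b P'
  have h5 : 2 ≤ b ^ 5 := le_trans hb (Nat.le_self_pow (by norm_num) b)
  have hbP : b + P ≤ 2 * (b * P) := by nlinarith
  have : b * (b ^ 4 * P) * b + b + P ≤ b ^ 7 * P := calc
    b * (b ^ 4 * P) * b + b + P ≤ b ^ 5 * (b * P) + b ^ 5 * (b * P) := by
        nlinarith [Nat.mul_le_mul_right (b * P) h5]
    _ ≤ b * (b ^ 5 * (b * P)) := by nlinarith [Nat.mul_le_mul_right (b ^ 5 * (b * P)) hb]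
    _ = b ^ 7 * P := by ring
  exact_mod_cast this

lemma segStart_of_ne_zero (b T' P' v : ℕ) {i : ℕ} (hi : i ≠ 0) :
    segStart b T' P' v i = ⌊((v : ℚ) - T') / -slopeE b i⌋ - (b : ℤ) ^ 8 * bigP b P' := by
  rw [segStart, if_neg hi]
  conv_rhs => rw [← Rat.num_div_den (-slopeE b i)]
  rw [div_div_eq_mul_div, mul_comm]

lemma sub_add_lt_slopeE_mul_of_lt_segStart {b T' P' v j ℓ : ℕ} (hj : j ≠ 0)
    (hneg : slopeE b j < 0) (hb : b * slopeE b j ≤ -1)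
    (hℓ : (ℓ : ℤ) < segStart b T' P' v j) :
    (T' : ℚ) - v + b ^ 7 * bigP b P' < slopeE b j * ℓ := by
  set e := slopeE b j
  rw [segStart_of_ne_zero _ _ _ _ hj] at hℓ
  have hfloor := Int.floor_le (((v : ℚ) - T') / -e)
  have hℓ' : (ℓ : ℚ) < ((v : ℚ) - T') / -e - b ^ 8 * bigP b P' := by
    have : ((ℓ : ℤ) : ℚ) < ((⌊((v : ℚ) - T') / -e⌋ - (b : ℤ) ^ 8 * bigP b P' : ℤ) : ℚ) := by
      exact_mod_cast hℓ
    push_cast at this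
    linarith
  have hdiv : -e * (((v : ℚ) - T') / -e) = v - T' := mul_div_cancel₀ _ (by linarith)
  have hP : (0 : ℚ) ≤ b ^ 7 * bigP b P' := by positivity
  have : b ^ 8 * (bigP b P' : ℚ) * e = (b * e) * (b ^ 7 * bigP b P') := by ring
  nlinarith

section Descent

variable {St AP : Type} (A : OCA St AP) {π : LPS St} {b T' P' v : ℕ} (hb : 2 ≤ b) (hP' : 1 ≤ P')
  (hπ : A.IsLPS π) (hπb : π.flat.length ≤ b) {τ σ : List (OTrans St)} (hτ : π.Shaped τ)
  (hσ : σ <+: τ) (hσA : ∀ t ∈ σ, t ∈ A.delta)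
include hb hP' hπ hπb hτ hσ hσA

lemma OCA.segStart_le_length_of_prefix_shaped {j : ℕ} (hj : j < numNegSlopes b)
    (hsteep : ∀ β, IsCycle β → β.length ≤ b → (∀ t ∈ β, t ∈ A.delta) →
      listPow β (b ^ 4 * bigP b P') <:+: σ → effectOf β < 0 → slopeE b (j + 1) ≤ slopeOf β)
    (hdrop : effectOf σ ≤ (T' : ℤ) - v) :
    segStart b T' P' v (j + 1) ≤ σ.length := by
  obtain ⟨he_mem, he_neg⟩ := slopeE_succ_mem_and_neg hj
  have hσ_eff := A.effectOf_ge_of_prefix_shaped hπ hπb hτ hσ hσA _ _ he_neg.le hsteep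
  have hnum := add_le_pow_seven_mul_bigP hb hP'
  have hdrop' : (effectOf σ : ℚ) ≤ T' - v := by exact_mod_cast hdrop
  by_contra! hlt
  have := sub_add_lt_slopeE_mul_of_lt_segStart (Nat.succ_ne_zero j) he_neg
    (mul_le_neg_one_of_mem_basicSlopes he_mem he_neg) hlt
  push_cast at hσ_eff
  linarith

lemma OCA.lt_add_effectOf_of_prefix_shaped
    (hsteep : ∀ β, IsCycle β → β.length ≤ b → (∀ t ∈ β, t ∈ A.delta) →
      listPow β (b ^ 4 * bigP b P') <:+: σ → 0 ≤ effectOf β)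
    (hT' : T' < bigP b P') (hv : cThresh b P' < v) :
    (T' : ℤ) < v + effectOf σ := by
  have hσ_eff := A.effectOf_ge_of_prefix_shaped hπ hπb hτ hσ hσA _ 0 le_rfl
    fun β hβ hβb hβA hpow hneg => absurd (hsteep β hβ hβb hβA hpow) (not_le.mpr hneg)
  have hnum := add_le_pow_seven_mul_bigP hb hP'
  have hv' : (b ^ 7 * bigP b P' : ℚ) < v := by
    have := Nat.mul_le_mul_right (bigP b P') (Nat.pow_le_pow_right (n := b) (by omega)
      (by norm_num : 7 ≤ 11))
    exact_mod_cast this.trans_lt hv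
  have hT'' : (T' : ℚ) < bigP b P' := by exact_mod_cast hT'
  push_cast at hσ_eff
  exact_mod_cast (by linarith : (T' : ℚ) < v + effectOf σ)

end Descent

theorem segments_have_fast_cycles_general {St AP : Type} (A : OCA St AP)
    (b : ℕ) (hb : 3 ≤ b)
    (T' P' : ℕ) (hP' : 1 ≤ P') (hT' : T' < bigP b P')
    (s : St) (v : ℕ) (hv : cThresh b P' < v)
    (τ τ₀ : List (OTrans St)) (hpre : τ <+: τ₀) (hτ₀ : A.IsBasic b τ₀ (s, v))
    (i : ℕ)
    (hlen : i = numNegSlopes b ∨ (τ.length : ℤ) < segStart b T' P' v (i + 1))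
    (hreach : ∃ (σ : List (OTrans St)) (c' : St × ℕ),
      σ <+: τ ∧ A.RunsTo σ (s, v) c' ∧ c'.2 ≤ T') :
    1 ≤ i ∧
    ∃ (β : List (OTrans St)) (j : ℕ),
      IsCycle β ∧ β.length ≤ b ∧
      listPow β (b ^ 4 * bigP b P') <:+: τ ∧
      1 ≤ j ∧ j ≤ i ∧ slopeOf β = slopeE b j := by
  obtain ⟨σ, c', hστ, hσrun, hc'⟩ := hreach
  obtain ⟨π, -, hπ, hπb, hshape, -⟩ := hτ₀
  suffices h : ∃ (β : List (OTrans St)) (j : ℕ), IsCycle β ∧ β.length ≤ b ∧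
      listPow β (b ^ 4 * bigP b P') <:+: τ ∧ 1 ≤ j ∧ j ≤ i ∧ slopeOf β = slopeE b j by
    obtain ⟨β, j, hβ⟩ := h
    exact ⟨hβ.2.2.2.1.trans hβ.2.2.2.2.1, β, j, hβ⟩
  by_contra! hfast
  have hsteep : ∀ β, IsCycle β → β.length ≤ b → (∀ t ∈ β, t ∈ A.delta) →
      listPow β (b ^ 4 * bigP b P') <:+: σ → effectOf β < 0 →
      i < numNegSlopes b ∧ slopeE b (i + 1) ≤ slopeOf β := fun β hβ hβb hβA hpow hneg =>
    OCA.slopeE_succ_le_slopeOf hβA hβb hneg (hfast β · hβ hβb (hpow.trans hστ.isInfix))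
  have hdrop : effectOf σ ≤ (T' : ℤ) - v := by
    have := hσrun.counter_eq
    omega
  by_cases him : i < numNegSlopes b
  · have := A.segStart_le_length_of_prefix_shaped (by omega) hP' hπ hπb hshape (hστ.trans hpre)
      hσrun.mem_delta him (fun β hβ hβb hβA hpow hneg => (hsteep β hβ hβb hβA hpow hneg).2) hdrop
    have := hστ.length_le
    omega
  · have := A.lt_add_effectOf_of_prefix_shaped (by omega) hP' hπ hπb hshape (hστ.trans hpre)
      hσrun.mem_delta (fun β hβ hβb hβA hpow => not_lt.mp fun hneg =>
        him (hsteep β hβ hβb hβA hpow hneg).1) hT' hv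
    omega

/-- (Lemma `SegmentsCycles`, item 2.) Let `τ` be a basic path
of `A`, or a prefix of one, valid from a configuration `(s, v)` with `v > cT`,
and let `i ≤ m`. If the length of `τ` is less than `𝔰_{i+1}(v)` (a vacuous
condition when `i = m`, since `𝔰_{m+1}(v) = ∞`) and some counter value along
`τ` is at most `T′`, then `i ≥ 1` and `τ` contains `b⁴·P` consecutive
repetitions of a cycle `β` of length at most `b` whose slope equals `𝑒_j` for
some `1 ≤ j ≤ i`. -/
theorem segments_have_fast_cycles {St AP : Type} [Fintype St] (A : OCA St AP)
    (b : ℕ) (hb : 3 ≤ b)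
    (hbasic : ∀ (c c' : St × ℕ) (ℓ : ℕ), A.ReachN ℓ c c' →
      ∃ τ : List (OTrans St), τ.length = ℓ ∧ A.IsBasic b τ c ∧ A.RunsTo τ c c')
    (T' P' : ℕ) (hP' : 1 ≤ P') (hT' : T' < bigP b P')
    (s : St) (v : ℕ) (hv : cThresh b P' < v)
    (τ τ₀ : List (OTrans St)) (hpre : τ <+: τ₀) (hτ₀ : A.IsBasic b τ₀ (s, v))
    (i : ℕ) (hi : i ≤ numNegSlopes b)
    (hlen : i = numNegSlopes b ∨ (τ.length : ℤ) < segStart b T' P' v (i + 1))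
    (hreach : ∃ (σ : List (OTrans St)) (c' : St × ℕ),
      σ <+: τ ∧ A.RunsTo σ (s, v) c' ∧ c'.2 ≤ T') :
    1 ≤ i ∧
    ∃ (β : List (OTrans St)) (j : ℕ),
      IsCycle β ∧ β.length ≤ b ∧
      listPow β (b ^ 4 * bigP b P') <:+: τ ∧
      1 ≤ j ∧ j ≤ i ∧ slopeOf β = slopeE b j :=
  segments_have_fast_cycles_general A b hb T' P' hP' hT' s v hv τ τ₀ hpre hτ₀ i hlen hreach
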